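/- arXiv:2604.10047 — 3 statements merged into one kernel-verified Lean document; each statement's English description precedes it below -/
import Mathlib

section
/- Let S be the left shift on ℓ²(ℕ), p the projection onto span{e₀}, and t the bilateral shift on ℓ²(ℤ). Define on ℓ²(ℕ)⊗ℓ²(ℕ)⊗ℓ²(ℤ) the elements B₁(r,n,m) = S*^{n₁}S^{m₁} ⊗ S*^{n₁}S^{m₁} ⊗ t^r with r = m₁ - n₁, B₂(r,n,m) = S*^{n₁}S^{m₁} ⊗ S*^{n₂}pS^{m₂} ⊗ t^r with r = m₁-n₁, n₁ ≥ n₂, m₁ ≥ m₂, B₃(r,n,m) = S*^{n₁}pS^{m₁} ⊗ S*^{n₂}S^{m₂} ⊗ t^r with r = m₂-n₂, n₁ ≤ n₂, m₁ ≤ m₂, and B₄(r,n,m) = S*^{n₁}pS^{m₁} ⊗ S*^{n₂}pS^{m₂} ⊗ t^r. Then the set T consisting of 0 together with all the B_i(r,n,m) is closed under operator multiplication and under taking adjoints, and for every nonzero a ∈ T one has a a* a = a and a* a a* = a*; hence T is an inverse semigroup with zero. -/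
open ContinuousLinearMap
open scoped Classical

noncomputable section

namespace SOq

variable {H : Type} [NormedAddCommGroup H] [InnerProductSpace ℂ H] [CompleteSpace H]

/-- `pj A = 1 - A* A`; for the left shift this is the rank-one projection onto `e 0`. -/
def pj (A : H →L[ℂ] H) : H →L[ℂ] H := 1 - adjoint A * A

/-- `B₁(r,n,m) = S*^{n₁} S^{m₁} ⊗ S*^{n₁} S^{m₁} ⊗ t^r`, where `A`, `B'` are the shifts
acting on the first, resp. second, tensor factor and `T' r` is `1 ⊗ 1 ⊗ t^r`. -/
def B1 (A B' : H →L[ℂ] H) (T' : ℤ → (H →L[ℂ] H)) (r : ℤ) (n m : ℕ × ℕ) : H →L[ℂ] H :=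
  (adjoint A) ^ n.1 * A ^ m.1 * (adjoint B') ^ n.1 * B' ^ m.1 * T' r

/-- `B₂(r,n,m) = S*^{n₁} S^{m₁} ⊗ S*^{n₂} p S^{m₂} ⊗ t^r`. -/
def B2 (A B' : H →L[ℂ] H) (T' : ℤ → (H →L[ℂ] H)) (r : ℤ) (n m : ℕ × ℕ) : H →L[ℂ] H :=
  (adjoint A) ^ n.1 * A ^ m.1 * (adjoint B') ^ n.2 * pj B' * B' ^ m.2 * T' r

/-- `B₃(r,n,m) = S*^{n₁} p S^{m₁} ⊗ S*^{n₂} S^{m₂} ⊗ t^r`. -/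
def B3 (A B' : H →L[ℂ] H) (T' : ℤ → (H →L[ℂ] H)) (r : ℤ) (n m : ℕ × ℕ) : H →L[ℂ] H :=
  (adjoint A) ^ n.1 * pj A * A ^ m.1 * (adjoint B') ^ n.2 * B' ^ m.2 * T' r

/-- `B₄(r,n,m) = S*^{n₁} p S^{m₁} ⊗ S*^{n₂} p S^{m₂} ⊗ t^r`. -/
def B4 (A B' : H →L[ℂ] H) (T' : ℤ → (H →L[ℂ] H)) (r : ℤ) (n m : ℕ × ℕ) : H →L[ℂ] H :=
  (adjoint A) ^ n.1 * pj A * A ^ m.1 * (adjoint B') ^ n.2 * pj B' * B' ^ m.2 * T' r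

/-- `P_i(n) = B_i(0,n,n)`. -/
def P1 (A B' : H →L[ℂ] H) (T' : ℤ → (H →L[ℂ] H)) (n : ℕ × ℕ) : H →L[ℂ] H := B1 A B' T' 0 n n
def P2 (A B' : H →L[ℂ] H) (T' : ℤ → (H →L[ℂ] H)) (n : ℕ × ℕ) : H →L[ℂ] H := B2 A B' T' 0 n n
def P3 (A B' : H →L[ℂ] H) (T' : ℤ → (H →L[ℂ] H)) (n : ℕ × ℕ) : H →L[ℂ] H := B3 A B' T' 0 n n
def P4 (A B' : H →L[ℂ] H) (T' : ℤ → (H →L[ℂ] H)) (n : ℕ × ℕ) : H →L[ℂ] H := B4 A B' T' 0 n n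

/-- The hypotheses identifying `H` with `ℓ²(ℕ)⊗ℓ²(ℕ)⊗ℓ²(ℤ)` with orthonormal basis `e`,
`A = S⊗1⊗1`, `B' = 1⊗S⊗1` (left shifts) and `T' r = 1⊗1⊗t^r` (bilateral shift powers). -/
def ShiftHyp (e : HilbertBasis (ℕ × ℕ × ℤ) ℂ H) (A B' : H →L[ℂ] H)
    (T' : ℤ → (H →L[ℂ] H)) : Prop :=
  (∀ (j : ℕ) (k : ℤ), A (e (0, j, k)) = 0) ∧
  (∀ (i j : ℕ) (k : ℤ), A (e (i + 1, j, k)) = e (i, j, k)) ∧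
  (∀ (i : ℕ) (k : ℤ), B' (e (i, 0, k)) = 0) ∧
  (∀ (i j : ℕ) (k : ℤ), B' (e (i, j + 1, k)) = e (i, j, k)) ∧
  (∀ (r : ℤ) (i j : ℕ) (k : ℤ), T' r (e (i, j, k)) = e (i, j, k + r))

/-- The inverse semigroup `T`: zero together with all admissible words `B_i(r,n,m)`. -/
def TSet (A B' : H →L[ℂ] H) (T' : ℤ → (H →L[ℂ] H)) : Set (H →L[ℂ] H) :=
  {0} ∪ {x | ∃ n m : ℕ × ℕ, x = B1 A B' T' ((m.1 : ℤ) - n.1) n m} ∪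
  {x | ∃ n m : ℕ × ℕ, n.2 ≤ n.1 ∧ m.2 ≤ m.1 ∧ x = B2 A B' T' ((m.1 : ℤ) - n.1) n m} ∪
  {x | ∃ n m : ℕ × ℕ, n.1 ≤ n.2 ∧ m.1 ≤ m.2 ∧ x = B3 A B' T' ((m.2 : ℤ) - n.2) n m} ∪
  {x | ∃ (r : ℤ) (n m : ℕ × ℕ), x = B4 A B' T' r n m}

/-- The projection semilattice `E` of `T`. -/
def ESet (A B' : H →L[ℂ] H) (T' : ℤ → (H →L[ℂ] H)) : Set (H →L[ℂ] H) :=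
  {0} ∪ {x | ∃ n : ℕ, x = P1 A B' T' (n, n)} ∪
  {x | ∃ n : ℕ × ℕ, n.2 ≤ n.1 ∧ x = P2 A B' T' n} ∪
  {x | ∃ n : ℕ × ℕ, n.1 ≤ n.2 ∧ x = P3 A B' T' n} ∪
  {x | ∃ n : ℕ × ℕ, x = P4 A B' T' n}

/-- A filter in a semilattice-with-zero `E` of projections (`e ≤ f ↔ e * f = e`). -/
def IsFilterIn {X : Type} [Ring X] (E A : Set X) : Prop :=
  A ⊆ E ∧ (0 : X) ∉ A ∧ (∀ a ∈ A, ∀ f ∈ E, a * f = a → f ∈ A) ∧ ∀ a ∈ A, ∀ b ∈ A, a * b ∈ A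

/-- An ultrafilter: a maximal filter. -/
def IsUltrafilterIn {X : Type} [Ring X] (E A : Set X) : Prop :=
  IsFilterIn E A ∧ ∀ B, IsFilterIn E B → A ⊆ B → B = A

/-- `A_{Λ(k)}` for finite `k ∈ ℕ²`. -/
def ALamFin (A B' : H →L[ℂ] H) (T' : ℤ → (H →L[ℂ] H)) (k : ℕ × ℕ) : Set (H →L[ℂ] H) :=
  {x | ∃ n : ℕ, n ≤ min k.1 k.2 ∧ x = P1 A B' T' (n, n)} ∪
  {x | ∃ n : ℕ × ℕ, n.2 = k.2 ∧ n.2 ≤ n.1 ∧ n.1 ≤ k.1 ∧ x = P2 A B' T' n} ∪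
  {x | ∃ n : ℕ × ℕ, n.1 = k.1 ∧ n.1 ≤ n.2 ∧ n.2 ≤ k.2 ∧ x = P3 A B' T' n} ∪
  {P4 A B' T' k}

/-- `A_{Λ(k)}` for `k ∈ (ℕ∪{∞})²`, with `∞` encoded as `none`. -/
def ALam (A B' : H →L[ℂ] H) (T' : ℤ → (H →L[ℂ] H)) :
    Option ℕ × Option ℕ → Set (H →L[ℂ] H) := fun k =>
  match k with
  | (some k1, some k2) => ALamFin A B' T' (k1, k2)
  | (some k1, none) =>
      {x | ∃ n : ℕ, n ≤ k1 ∧ x = P1 A B' T' (n, n)} ∪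
      {x | ∃ l : ℕ, k1 ≤ l ∧ x = P3 A B' T' (k1, l)}
  | (none, some k2) =>
      {x | ∃ n : ℕ, n ≤ k2 ∧ x = P1 A B' T' (n, n)} ∪
      {x | ∃ l : ℕ, k2 ≤ l ∧ x = P2 A B' T' (l, k2)}
  | (none, none) => {x | ∃ l : ℕ, x = P1 A B' T' (l, l)}

/-- The character (indicator function) of a subset. -/
def charOf {X : Type} (s : Set X) : X → Bool := fun x => decide (x ∈ s)

/-- Characters on `E`: nonzero multiplicative `{0,1}`-valued maps killing `0`. -/
def IsChar {X : Type} [Ring X] (E : Set X) (x : X → Bool) : Prop :=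
  (∃ a ∈ E, x a = true) ∧ x 0 = false ∧ ∀ a ∈ E, ∀ b ∈ E, x (a * b) = (x a && x b)

/-- `n ≤ k` for `n : ℕ` and `k ∈ ℕ∪{∞}` (`∞ = none`). -/
def leO (n : ℕ) (k : Option ℕ) : Prop := ∀ m : ℕ, k = some m → n ≤ m

/-- The domain set `D_s = {x ∈ Ê_tight : x(s s*) = 1}` (tight = ultrafilter characters). -/
def Dset (A B' : H →L[ℂ] H) (T' : ℤ → (H →L[ℂ] H)) (s : H →L[ℂ] H) :
    Set ((H →L[ℂ] H) → Bool) :=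
  {x | (∃ Aset, IsUltrafilterIn (ESet A B' T') Aset ∧ x = charOf Aset) ∧
    x (s * adjoint s) = true}


end SOq

/-! Since `S S* = 1`, the words `S*^n p^ε S^m` (`ε ∈ {0, 1}`, `p = 1 - S* S`) multiply like
the bicyclic monoid: the product of two words is `0` when `p` meets a surplus `S` or `S*`,
and otherwise the word with indices `n + (p - m)`, `(m - p) + q` and exponent `ε ∨ ε'`.
Each `B_i(r, n, m)` is a product of such a word in `S ⊗ 1 ⊗ 1`, one in `1 ⊗ S ⊗ 1` and the
unitary `1 ⊗ 1 ⊗ t^r`, and these three families commute with each other and with the adjoints.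
So products and adjoints of the `B_i` are computed factorwise, and the index constraints
defining `B₁, …, B₄` survive this arithmetic. -/

namespace Toeplitz

variable {R : Type*} [Ring R] [StarRing R]

section Word

variable {X a : R} {b c : Bool} {n m p q : ℕ}

def kerProj (X : R) : R := 1 - star X * X

def word (X : R) (b : Bool) (n m : ℕ) : R := star X ^ n * (cond b (kerProj X) 1 * X ^ m)

theorem star_kerProj : star (kerProj X) = kerProj X := by
  simp [kerProj]

theorem star_word : star (word X b n m) = word X b m n := by
  cases b <;> simp [word, star_pow, star_kerProj, mul_assoc]

theorem commute_word (hX : Commute a X) (hX' : Commute a (star X)) :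
    Commute a (word X b n m) := by
  have hP : Commute a (cond b (kerProj X) 1) := by
    cases b
    · exact Commute.one_right a
    · exact (Commute.one_right a).sub_right (hX'.mul_right hX)
  exact (hX'.pow_right n).mul_right (hP.mul_right (hX.pow_right m))

variable (hX : X * star X = 1)
include hX

theorem pow_mul_star_pow (m p : ℕ) : X ^ m * star X ^ p = star X ^ (p - m) * X ^ (m - p) := by
  induction m generalizing p with
  | zero => simp
  | succ m ih =>
    cases p with
    | zero => simp
    | succ p =>
      rw [pow_succ, pow_succ', mul_assoc, ← mul_assoc X, hX, one_mul, ih,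
        Nat.add_sub_add_right, Nat.add_sub_add_right]

theorem mul_kerProj : X * kerProj X = 0 := by
  rw [kerProj, mul_sub, mul_one, ← mul_assoc, hX, one_mul, sub_self]

theorem kerProj_mul_star : kerProj X * star X = 0 := by
  rw [kerProj, sub_mul, one_mul, mul_assoc, hX, mul_one, sub_self]

theorem kerProj_mul_self : kerProj X * kerProj X = kerProj X := by
  nth_rw 2 [kerProj]
  rw [mul_sub, mul_one, ← mul_assoc, kerProj_mul_star hX, zero_mul, sub_zero]

theorem word_mul (hb : b = true → p ≤ m) (hc : c = true → m ≤ p) :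
    word X b n m * word X c p q = word X (b || c) (n + (p - m)) (m - p + q) := by
  have hbX : Commute (cond b (kerProj X) 1) (star X ^ (p - m)) := by
    cases b
    · exact Commute.one_left _
    · simp [Nat.sub_eq_zero_of_le (hb rfl)]
  have hcX : Commute (X ^ (m - p)) (cond c (kerProj X) 1) := by
    cases c
    · exact Commute.one_right _
    · simp [Nat.sub_eq_zero_of_le (hc rfl)]
  have hbc : cond b (kerProj X) 1 * cond c (kerProj X) 1 = cond (b || c) (kerProj X) 1 := by
    cases b <;> cases c <;> simp [kerProj_mul_self hX]
  calc word X b n m * word X c p q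
      = star X ^ n * (cond b (kerProj X) 1 * ((X ^ m * star X ^ p) *
          (cond c (kerProj X) 1 * X ^ q))) := by simp only [word, mul_assoc]
    _ = star X ^ n * (star X ^ (p - m) *
          ((cond b (kerProj X) 1 * cond c (kerProj X) 1) * (X ^ (m - p) * X ^ q))) := by
        rw [pow_mul_star_pow hX]
        simp only [mul_assoc]
        rw [hbX.left_comm, hcX.left_comm]
    _ = word X (b || c) (n + (p - m)) (m - p + q) := by
        rw [hbc, word, pow_add, pow_add]
        simp only [mul_assoc]

theorem word_mul_eq_zero_of_lt (h : m < p) : word X true n m * word X c p q = 0 := by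
  obtain ⟨d, rfl⟩ := Nat.exists_eq_add_of_lt h
  simp only [word, cond_true, mul_assoc]
  rw [← mul_assoc (X ^ m), pow_mul_star_pow hX, show m + d + 1 - m = d + 1 by omega,
    Nat.sub_eq_zero_of_le (by omega), pow_zero, mul_one, pow_succ', ← mul_assoc (kerProj X),
    ← mul_assoc (kerProj X), kerProj_mul_star hX]
  simp

theorem word_mul_eq_zero_of_gt (h : p < m) : word X b n m * word X true p q = 0 := by
  obtain ⟨d, rfl⟩ := Nat.exists_eq_add_of_lt h
  simp only [word, cond_true, mul_assoc]
  rw [← mul_assoc (X ^ (p + d + 1)), pow_mul_star_pow hX, show p + d + 1 - p = d + 1 by omega,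
    Nat.sub_eq_zero_of_le (by omega), pow_zero, one_mul, pow_succ, mul_assoc (X ^ d),
    ← mul_assoc X, mul_kerProj hX]
  simp

theorem word_mul_eq_zero_or (b c : Bool) (n m p q : ℕ) :
    ((b = true → p ≤ m) ∧ (c = true → m ≤ p)) ∨ word X b n m * word X c p q = 0 := by
  by_cases hb : b = true → p ≤ m
  · by_cases hc : c = true → m ≤ p
    · exact Or.inl ⟨hb, hc⟩
    · push Not at hc
      obtain ⟨rfl, h⟩ := hc
      exact Or.inr (word_mul_eq_zero_of_gt hX h)
  · push Not at hb
    obtain ⟨rfl, h⟩ := hb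
    exact Or.inr (word_mul_eq_zero_of_lt hX h)

end Word

section TensorWord

/-- Algebraic relations satisfied by `S ⊗ 1 ⊗ 1`, `1 ⊗ S ⊗ 1` and `r ↦ 1 ⊗ 1 ⊗ t ^ r`. -/
structure ShiftRelations (X Y : R) (T : ℤ → R) : Prop where
  mul_star_left : X * star X = 1
  mul_star_right : Y * star Y = 1
  commute : Commute X Y
  commute_star : Commute X (star Y)
  commute_left : ∀ r, Commute (T r) X
  commute_right : ∀ r, Commute (T r) Y
  mul_eq_add : ∀ r s, T r * T s = T (r + s)
  star_eq_neg : ∀ r, star (T r) = T (-r)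

def tensorWord (X Y : R) (T : ℤ → R) (b : Bool × Bool) (n m : ℕ × ℕ) (r : ℤ) : R :=
  word X b.1 n.1 m.1 * (word Y b.2 n.2 m.2 * T r)

/-- The index conditions of the four families `B₁, …, B₄`, indexed by which tensor factors
carry the projection `p`. -/
def Admissible : Bool × Bool → ℕ × ℕ → ℕ × ℕ → ℤ → Prop
  | (false, false), n, m, r => n.2 = n.1 ∧ m.2 = m.1 ∧ r = (m.1 : ℤ) - n.1
  | (false, true), n, m, r => n.2 ≤ n.1 ∧ m.2 ≤ m.1 ∧ r = (m.1 : ℤ) - n.1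
  | (true, false), n, m, r => n.1 ≤ n.2 ∧ m.1 ≤ m.2 ∧ r = (m.2 : ℤ) - n.2
  | (true, true), _, _, _ => True

def admissibleWords (X Y : R) (T : ℤ → R) : Set R :=
  insert 0 {x | ∃ b n m r, Admissible b n m r ∧ x = tensorWord X Y T b n m r}

theorem Admissible.star {b : Bool × Bool} {n m : ℕ × ℕ} {r : ℤ} (h : Admissible b n m r) :
    Admissible b m n (-r) := by
  obtain ⟨_ | _, _ | _⟩ := b <;> simp only [Admissible] at h ⊢ <;> omega

theorem Admissible.mul {b c : Bool × Bool} {n m p q : ℕ × ℕ} {r s : ℤ}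
    (hadm : Admissible b n m r) (hadm' : Admissible c p q s)
    (hb₁ : b.1 = true → p.1 ≤ m.1) (hc₁ : c.1 = true → m.1 ≤ p.1)
    (hb₂ : b.2 = true → p.2 ≤ m.2) (hc₂ : c.2 = true → m.2 ≤ p.2) :
    Admissible (b.1 || c.1, b.2 || c.2) (n.1 + (p.1 - m.1), n.2 + (p.2 - m.2))
      (m.1 - p.1 + q.1, m.2 - p.2 + q.2) (r + s) := by
  obtain ⟨_ | _, _ | _⟩ := b <;> obtain ⟨_ | _, _ | _⟩ := c <;>
    simp only [Admissible, Bool.or_false, Bool.or_true,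
      forall_const, Bool.false_eq_true, false_implies] at * <;> omega

namespace ShiftRelations

variable {X Y : R} {T : ℤ → R} (h : ShiftRelations X Y T)
include h

theorem commute_star_left (r : ℤ) : Commute (T r) (star X) := by
  simpa [h.star_eq_neg] using (h.commute_left (-r)).star_star

theorem commute_star_right (r : ℤ) : Commute (T r) (star Y) := by
  simpa [h.star_eq_neg] using (h.commute_right (-r)).star_star

theorem commute_word_word (b c : Bool) (n m p q : ℕ) : Commute (word X b n m) (word Y c p q) := by
  refine commute_word (commute_word h.commute.symm ?_).symm (commute_word ?_ ?_).symm
  · simpa using h.commute_star.star_star.symm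
  · exact h.commute_star.symm
  · exact h.commute.star_star.symm

theorem commute_T_word_left (r : ℤ) (b : Bool) (n m : ℕ) : Commute (T r) (word X b n m) :=
  commute_word (h.commute_left r) (h.commute_star_left r)

theorem commute_T_word_right (r : ℤ) (b : Bool) (n m : ℕ) : Commute (T r) (word Y b n m) :=
  commute_word (h.commute_right r) (h.commute_star_right r)

theorem tensorWord_mul_eq (b c : Bool × Bool) (n m p q : ℕ × ℕ) (r s : ℤ) :
    tensorWord X Y T b n m r * tensorWord X Y T c p q s =
      word X b.1 n.1 m.1 * word X c.1 p.1 q.1 *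
        (word Y b.2 n.2 m.2 * word Y c.2 p.2 q.2 * T (r + s)) := by
  simp only [tensorWord, mul_assoc]
  rw [(h.commute_T_word_left r _ _ _).left_comm, (h.commute_T_word_right r _ _ _).left_comm,
    h.mul_eq_add, (h.commute_word_word _ _ _ _ _ _).symm.left_comm]

theorem tensorWord_mul {b c : Bool × Bool} {n m p q : ℕ × ℕ} (r s : ℤ)
    (hb₁ : b.1 = true → p.1 ≤ m.1) (hc₁ : c.1 = true → m.1 ≤ p.1)
    (hb₂ : b.2 = true → p.2 ≤ m.2) (hc₂ : c.2 = true → m.2 ≤ p.2) :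
    tensorWord X Y T b n m r * tensorWord X Y T c p q s =
      tensorWord X Y T (b.1 || c.1, b.2 || c.2) (n.1 + (p.1 - m.1), n.2 + (p.2 - m.2))
        (m.1 - p.1 + q.1, m.2 - p.2 + q.2) (r + s) := by
  rw [h.tensorWord_mul_eq, word_mul h.mul_star_left hb₁ hc₁, word_mul h.mul_star_right hb₂ hc₂,
    tensorWord]

theorem star_tensorWord (b : Bool × Bool) (n m : ℕ × ℕ) (r : ℤ) :
    star (tensorWord X Y T b n m r) = tensorWord X Y T b m n (-r) := by
  simp only [tensorWord, star_mul, star_word, h.star_eq_neg, mul_assoc]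
  rw [(h.commute_T_word_right _ _ _ _).left_comm, (h.commute_T_word_left _ _ _ _).eq,
    (h.commute_word_word _ _ _ _ _ _).left_comm]

theorem tensorWord_mul_star_mul (b : Bool × Bool) (n m : ℕ × ℕ) (r : ℤ) :
    tensorWord X Y T b n m r * star (tensorWord X Y T b n m r) * tensorWord X Y T b n m r =
      tensorWord X Y T b n m r := by
  rw [h.star_tensorWord, h.tensorWord_mul _ _ (fun _ => le_rfl) (fun _ => le_rfl)
    (fun _ => le_rfl) (fun _ => le_rfl)]
  simp only [Nat.sub_self, add_zero, zero_add, Bool.or_self]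
  rw [h.tensorWord_mul _ _ (fun _ => le_rfl) (fun _ => le_rfl) (fun _ => le_rfl)
    (fun _ => le_rfl)]
  simp only [Nat.sub_self, add_zero, zero_add, Bool.or_self, neg_add_cancel_right]

theorem mul_mem {x y : R} (hx : x ∈ admissibleWords X Y T) (hy : y ∈ admissibleWords X Y T) :
    x * y ∈ admissibleWords X Y T := by
  rcases hx with rfl | ⟨b, n, m, r, hadm, rfl⟩
  · simp [admissibleWords]
  rcases hy with rfl | ⟨c, p, q, s, hadm', rfl⟩
  · simp [admissibleWords]
  rcases word_mul_eq_zero_or h.mul_star_left b.1 c.1 n.1 m.1 p.1 q.1 with ⟨hb₁, hc₁⟩ | h₁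
  · rcases word_mul_eq_zero_or h.mul_star_right b.2 c.2 n.2 m.2 p.2 q.2 with ⟨hb₂, hc₂⟩ | h₂
    · rw [h.tensorWord_mul r s hb₁ hc₁ hb₂ hc₂]
      exact Or.inr ⟨_, _, _, _, hadm.mul hadm' hb₁ hc₁ hb₂ hc₂, rfl⟩
    · simp [h.tensorWord_mul_eq, h₂, admissibleWords]
  · simp [h.tensorWord_mul_eq, h₁, admissibleWords]

theorem star_mem {x : R} (hx : x ∈ admissibleWords X Y T) : star x ∈ admissibleWords X Y T := by
  rcases hx with rfl | ⟨b, n, m, r, hadm, rfl⟩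
  · simp [admissibleWords]
  · exact Or.inr ⟨b, m, n, -r, hadm.star, h.star_tensorWord b n m r⟩

theorem mul_star_mul_of_mem {x : R} (hx : x ∈ admissibleWords X Y T) : x * star x * x = x := by
  rcases hx with rfl | ⟨b, n, m, r, -, rfl⟩
  · simp
  · exact h.tensorWord_mul_star_mul b n m r

end ShiftRelations

end TensorWord

end Toeplitz

namespace HilbertBasis

variable {ι 𝕜 E F : Type*} [RCLike 𝕜] [NormedAddCommGroup E] [InnerProductSpace 𝕜 E]
  [NormedAddCommGroup F] [InnerProductSpace 𝕜 F] (e : HilbertBasis ι 𝕜 E)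

theorem ext_clm {f g : E →L[𝕜] F} (h : ∀ i, f (e i) = g (e i)) : f = g := by
  refine ContinuousLinearMap.ext_on
    (Submodule.dense_iff_topologicalClosure_eq_top.mpr e.dense_span) ?_
  rintro _ ⟨i, rfl⟩
  exact h i

theorem adjoint_apply_eq [CompleteSpace E] [CompleteSpace F] {f : E →L[𝕜] F} {x : F} {y : E}
    (h : ∀ i, inner 𝕜 (f (e i)) x = inner 𝕜 (e i) y) : adjoint f x = y := by
  apply e.repr.injective
  ext i
  rw [e.repr_apply_apply, e.repr_apply_apply, adjoint_inner_right, h]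

end HilbertBasis

namespace SOq

open Toeplitz

variable {H : Type} [NormedAddCommGroup H] [InnerProductSpace ℂ H] [CompleteSpace H]

namespace ShiftHyp

variable {e : HilbertBasis (ℕ × ℕ × ℤ) ℂ H} {A B' : H →L[ℂ] H} {T' : ℤ → (H →L[ℂ] H)}
  (hyp : ShiftHyp e A B' T')
include hyp

theorem adjoint_A_apply (i j : ℕ) (k : ℤ) : adjoint A (e (i, j, k)) = e (i + 1, j, k) := by
  have ho := orthonormal_iff_ite.mp e.orthonormal
  refine HilbertBasis.adjoint_apply_eq e fun ⟨a, b, c⟩ => ?_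
  cases a with
  | zero => rw [hyp.1, inner_zero_left, ho]; simp
  | succ a => rw [hyp.2.1, ho, ho]; simp

theorem adjoint_B_apply (i j : ℕ) (k : ℤ) : adjoint B' (e (i, j, k)) = e (i, j + 1, k) := by
  have ho := orthonormal_iff_ite.mp e.orthonormal
  refine HilbertBasis.adjoint_apply_eq e fun ⟨a, b, c⟩ => ?_
  cases b with
  | zero => rw [hyp.2.2.1, inner_zero_left, ho]; simp
  | succ b => rw [hyp.2.2.2.1, ho, ho]; simp

theorem adjoint_T_apply (r : ℤ) (i j : ℕ) (k : ℤ) :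
    adjoint (T' r) (e (i, j, k)) = e (i, j, k - r) := by
  have ho := orthonormal_iff_ite.mp e.orthonormal
  refine HilbertBasis.adjoint_apply_eq e fun ⟨a, b, c⟩ => ?_
  rw [hyp.2.2.2.2, ho, ho]
  exact if_congr (by simp only [Prod.mk.injEq]; omega) rfl rfl

theorem shiftRelations : ShiftRelations A B' T' := by
  have hA' := hyp.adjoint_A_apply
  have hB' := hyp.adjoint_B_apply
  have hT' := hyp.adjoint_T_apply
  obtain ⟨hA₀, hA, hB₀, hB, hT⟩ := hyp
  refine ⟨?_, ?_, ?_, ?_, fun r => ?_, fun r => ?_, fun r s => ?_, fun r => ?_⟩ <;>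
    refine HilbertBasis.ext_clm e fun ⟨i, j, k⟩ => ?_ <;>
    simp only [mul_apply_eq_comp, one_apply_eq_self, star_eq_adjoint]
  · rw [hA', hA]
  · rw [hB', hB]
  · rcases i with _ | i <;> rcases j with _ | j <;> simp [hA₀, hA, hB₀, hB]
  · rcases i with _ | i <;> simp [hA₀, hA, hB']
  · rcases i with _ | i <;> simp [hA₀, hA, hT]
  · rcases j with _ | j <;> simp [hB₀, hB, hT]
  · rw [hT, hT, hT, add_assoc, add_comm s]
  · rw [hT', hT, sub_eq_add_neg]

end ShiftHyp

theorem TSet_eq_admissibleWords (A B' : H →L[ℂ] H) (T' : ℤ → (H →L[ℂ] H)) :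
    TSet A B' T' = admissibleWords A B' T' := by
  have hB₁ (r n m) :
      B1 A B' T' r n m = tensorWord A B' T' (false, false) (n.1, n.1) (m.1, m.1) r := by
    simp only [B1, tensorWord, word, cond_false, one_mul, ← star_eq_adjoint, mul_assoc]
  have hB₂ (r n m) : B2 A B' T' r n m = tensorWord A B' T' (false, true) n m r := by
    simp only [B2, pj, tensorWord, word, kerProj, cond_false, cond_true, one_mul,
      ← star_eq_adjoint, mul_assoc]
  have hB₃ (r n m) : B3 A B' T' r n m = tensorWord A B' T' (true, false) n m r := by
    simp only [B3, pj, tensorWord, word, kerProj, cond_false, cond_true, one_mul,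
      ← star_eq_adjoint, mul_assoc]
  have hB₄ (r n m) : B4 A B' T' r n m = tensorWord A B' T' (true, true) n m r := by
    simp only [B4, pj, tensorWord, word, kerProj, cond_true, ← star_eq_adjoint, mul_assoc]
  ext x
  simp only [TSet, admissibleWords, Set.mem_union, Set.mem_insert_iff, Set.mem_singleton_iff,
    Set.mem_ofPred_eq, hB₁, hB₂, hB₃, hB₄]
  constructor
  · rintro ((((rfl | ⟨n, m, rfl⟩) | ⟨n, m, hn, hm, rfl⟩) | ⟨n, m, hn, hm, rfl⟩) | ⟨r, n, m, rfl⟩)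
    · exact Or.inl rfl
    · exact Or.inr ⟨(false, false), _, _, _, ⟨rfl, rfl, rfl⟩, rfl⟩
    · exact Or.inr ⟨(false, true), _, _, _, ⟨hn, hm, rfl⟩, rfl⟩
    · exact Or.inr ⟨(true, false), _, _, _, ⟨hn, hm, rfl⟩, rfl⟩
    · exact Or.inr ⟨(true, true), _, _, _, trivial, rfl⟩
  · rintro (rfl | ⟨⟨_ | _, _ | _⟩, ⟨n₁, n₂⟩, ⟨m₁, m₂⟩, r, hadm, rfl⟩)
    · exact Or.inl (Or.inl (Or.inl (Or.inl rfl)))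
    · dsimp only [Admissible] at hadm
      obtain ⟨hn, hm, rfl⟩ := hadm
      rw [hn, hm]
      exact Or.inl (Or.inl (Or.inl (Or.inr ⟨(n₁, n₁), (m₁, m₁), rfl⟩)))
    · obtain ⟨hn, hm, rfl⟩ := hadm
      exact Or.inl (Or.inl (Or.inr ⟨(n₁, n₂), (m₁, m₂), hn, hm, rfl⟩))
    · obtain ⟨hn, hm, rfl⟩ := hadm
      exact Or.inl (Or.inr ⟨(n₁, n₂), (m₁, m₂), hn, hm, rfl⟩)
    · exact Or.inr ⟨r, (n₁, n₂), (m₁, m₂), rfl⟩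

theorem stmt1 {H : Type} [NormedAddCommGroup H] [InnerProductSpace ℂ H]
    [CompleteSpace H] (e : HilbertBasis (ℕ × ℕ × ℤ) ℂ H) (A B' : H →L[ℂ] H)
    (T' : ℤ → (H →L[ℂ] H)) (hyp : ShiftHyp e A B' T') :
    (∀ x ∈ TSet A B' T', ∀ y ∈ TSet A B' T', x * y ∈ TSet A B' T') ∧
    (∀ x ∈ TSet A B' T', adjoint x ∈ TSet A B' T') ∧
    (∀ a ∈ TSet A B' T', a ≠ 0 →
      a * adjoint a * a = a ∧ adjoint a * a * adjoint a = adjoint a) := by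
  have h := hyp.shiftRelations
  simp only [TSet_eq_admissibleWords, ← star_eq_adjoint]
  refine ⟨fun x hx y hy => h.mul_mem hx hy, fun x hx => h.star_mem hx, fun a ha _ => ?_⟩
  simpa using And.intro (h.mul_star_mul_of_mem ha) (h.mul_star_mul_of_mem (h.star_mem ha))

end SOq
end
end

section
/- Let E be the commutative semigroup (meet-semilattice with zero) of projections of T, consisting of 0 and the projections P₁(n) (n₁=n₂), P₂(n) (n₁≥n₂), P₃(n) (n₁≤n₂), P₄(n) (n ∈ ℕ²). For k = (k₁,k₂) ∈ ℕ², the set A_{Λ(k)} = {P₁(n) : n₁=n₂ ≤ min{k₁,k₂}} ∪ {P₂(n) : k₂ = n₂ ≤ n₁ ≤ k₁} ∪ {P₃(n) : k₁ = n₁ ≤ n₂ ≤ k₂} ∪ {P₄(k)} is an ultrafilter in E, i.e. a maximal filter. -/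
open ContinuousLinearMap
open scoped Classical

noncomputable section

namespace SOq

variable {H : Type} [NormedAddCommGroup H] [InnerProductSpace ℂ H] [CompleteSpace H]

section Aux

set_option linter.unusedSectionVars false
set_option maxHeartbeats 1000000

open scoped ComplexInnerProductSpace

variable (e : HilbertBasis (ℕ × ℕ × ℤ) ℂ H)

lemma basis_eq_of_inner {x y : H} (h : ∀ i, ⟪e i, x⟫ = ⟪e i, y⟫) : x = y := by
  apply e.repr.injective
  apply lp.ext
  funext i
  rw [e.repr_apply_apply, e.repr_apply_apply, h]

lemma ext_basis {P Q : H →L[ℂ] H} (h : ∀ x, P (e x) = Q (e x)) : P = Q := by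
  refine ContinuousLinearMap.ext_on (s := Set.range ⇑e)
    (Submodule.dense_iff_topologicalClosure_eq_top.mpr e.dense_span) ?_
  rintro _ ⟨x, rfl⟩
  exact h x

lemma inner_basis (x y : ℕ × ℕ × ℤ) : ⟪e x, e y⟫ = if x = y then 1 else 0 :=
  orthonormal_iff_ite.mp e.orthonormal x y

lemma basis_ne_zero (x : ℕ × ℕ × ℤ) : e x ≠ 0 := e.orthonormal.ne_zero x

variable (A B' : H →L[ℂ] H) (T' : ℤ → (H →L[ℂ] H)) (hyp : ShiftHyp e A B' T')

section Act
include hyp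

lemma adjA_apply (i j : ℕ) (k : ℤ) : adjoint A (e (i, j, k)) = e (i + 1, j, k) := by
  apply basis_eq_of_inner e
  rintro ⟨a, b, c⟩
  rw [ContinuousLinearMap.adjoint_inner_right]
  cases a with
  | zero => rw [hyp.1, inner_zero_left, inner_basis, if_neg (by simp)]
  | succ a =>
      rw [hyp.2.1, inner_basis, inner_basis]
      exact if_congr (by simp) rfl rfl

lemma adjB_apply (i j : ℕ) (k : ℤ) : adjoint B' (e (i, j, k)) = e (i, j + 1, k) := by
  apply basis_eq_of_inner e
  rintro ⟨a, b, c⟩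
  rw [ContinuousLinearMap.adjoint_inner_right]
  cases b with
  | zero => rw [hyp.2.2.1, inner_zero_left, inner_basis, if_neg (by simp)]
  | succ b =>
      rw [hyp.2.2.2.1, inner_basis, inner_basis]
      exact if_congr (by simp) rfl rfl

lemma adjA_pow (n i j : ℕ) (k : ℤ) : ((adjoint A) ^ n) (e (i, j, k)) = e (i + n, j, k) := by
  induction n generalizing i with
  | zero => simp
  | succ n ih =>
      rw [pow_succ, ContinuousLinearMap.mul_apply, adjA_apply e A B' T' hyp, ih]
      have h : i + 1 + n = i + (n + 1) := by omega
      rw [h]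

lemma adjB_pow (n i j : ℕ) (k : ℤ) : ((adjoint B') ^ n) (e (i, j, k)) = e (i, j + n, k) := by
  induction n generalizing j with
  | zero => simp
  | succ n ih =>
      rw [pow_succ, ContinuousLinearMap.mul_apply, adjB_apply e A B' T' hyp, ih]
      have h : j + 1 + n = j + (n + 1) := by omega
      rw [h]

lemma A_pow (m i j : ℕ) (k : ℤ) :
    (A ^ m) (e (i, j, k)) = if m ≤ i then e (i - m, j, k) else 0 := by
  induction m generalizing i with
  | zero => simp
  | succ m ih =>
      rw [pow_succ, ContinuousLinearMap.mul_apply]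
      cases i with
      | zero => rw [hyp.1, map_zero, if_neg (by omega)]
      | succ i =>
          rw [hyp.2.1, ih]
          simp only [Nat.succ_sub_succ, Nat.succ_le_succ_iff]

lemma B_pow (m i j : ℕ) (k : ℤ) :
    (B' ^ m) (e (i, j, k)) = if m ≤ j then e (i, j - m, k) else 0 := by
  induction m generalizing j with
  | zero => simp
  | succ m ih =>
      rw [pow_succ, ContinuousLinearMap.mul_apply]
      cases j with
      | zero => rw [hyp.2.2.1, map_zero, if_neg (by omega)]
      | succ j =>
          rw [hyp.2.2.2.1, ih]
          simp only [Nat.succ_sub_succ, Nat.succ_le_succ_iff]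

lemma pjA_apply (i j : ℕ) (k : ℤ) :
    pj A (e (i, j, k)) = if i = 0 then e (i, j, k) else 0 := by
  rw [pj, ContinuousLinearMap.sub_apply, ContinuousLinearMap.one_apply,
    ContinuousLinearMap.mul_apply]
  cases i with
  | zero => rw [hyp.1, map_zero, if_pos rfl, sub_zero]
  | succ i => rw [hyp.2.1, adjA_apply e A B' T' hyp, if_neg (by omega), sub_self]

lemma pjB_apply (i j : ℕ) (k : ℤ) :
    pj B' (e (i, j, k)) = if j = 0 then e (i, j, k) else 0 := by
  rw [pj, ContinuousLinearMap.sub_apply, ContinuousLinearMap.one_apply,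
    ContinuousLinearMap.mul_apply]
  cases j with
  | zero => rw [hyp.2.2.1, map_zero, if_pos rfl, sub_zero]
  | succ j => rw [hyp.2.2.2.1, adjB_apply e A B' T' hyp, if_neg (by omega), sub_self]

lemma T0_apply (i j : ℕ) (k : ℤ) : T' 0 (e (i, j, k)) = e (i, j, k) := by
  rw [hyp.2.2.2.2, add_zero]

end Act


/-- `P` acts as the partial identity on the set `S` (times the `ℤ` factor). -/
def IsPI (P : H →L[ℂ] H) (S : Set (ℕ × ℕ)) : Prop :=
  ∀ i j : ℕ, ∀ k : ℤ, P (e (i, j, k)) = if (i, j) ∈ S then e (i, j, k) else 0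

variable {e A B' T'}

lemma IsPI.mul {P Q : H →L[ℂ] H} {S S' : Set (ℕ × ℕ)} (hP : IsPI e P S) (hQ : IsPI e Q S') :
    IsPI e (P * Q) (S ∩ S') := by
  intro i j k
  rw [ContinuousLinearMap.mul_apply, hQ]
  by_cases h' : (i, j) ∈ S'
  · rw [if_pos h', hP]
    by_cases h : (i, j) ∈ S
    · rw [if_pos h, if_pos ⟨h, h'⟩]
    · rw [if_neg h, if_neg (fun hc => h hc.1)]
  · rw [if_neg h', map_zero, if_neg (fun hc => h' hc.2)]

lemma IsPI.eq_of {P Q : H →L[ℂ] H} {S S' : Set (ℕ × ℕ)} (hP : IsPI e P S) (hQ : IsPI e Q S')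
    (hSS : S = S') : P = Q := by
  subst hSS
  apply ext_basis e
  rintro ⟨i, j, k⟩
  rw [hP, hQ]

lemma IsPI.set_eq {P : H →L[ℂ] H} {S S' : Set (ℕ × ℕ)} (hP : IsPI e P S) (hP' : IsPI e P S') :
    S = S' := by
  ext ⟨i, j⟩
  have h := (hP i j 0).symm.trans (hP' i j 0)
  constructor
  · intro hm
    by_contra hm'
    rw [if_pos hm, if_neg hm'] at h
    exact basis_ne_zero e _ h
  · intro hm
    by_contra hm'
    rw [if_neg hm', if_pos hm] at h
    exact basis_ne_zero e _ h.symm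

lemma IsPI.zero : IsPI e (0 : H →L[ℂ] H) ∅ := by
  intro i j k
  simp

lemma IsPI.ne_zero {P : H →L[ℂ] H} {S : Set (ℕ × ℕ)} (hP : IsPI e P S) {p : ℕ × ℕ}
    (hp : p ∈ S) : P ≠ 0 := by
  intro h
  have := hP p.1 p.2 0
  rw [h, if_pos hp] at this
  exact basis_ne_zero e _ ((ContinuousLinearMap.zero_apply _).symm.trans this).symm

include hyp

lemma isPI_P1 (n : ℕ) : IsPI e (P1 A B' T' (n, n)) {p | n ≤ p.1 ∧ n ≤ p.2} := by
  intro i j k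
  simp only [P1, B1, ContinuousLinearMap.mul_apply, T0_apply e A B' T' hyp,
    B_pow e A B' T' hyp]
  by_cases hj : n ≤ j
  · rw [if_pos hj, adjB_pow e A B' T' hyp, show j - n + n = j by omega,
      A_pow e A B' T' hyp]
    by_cases hi : n ≤ i
    · rw [if_pos hi, adjA_pow e A B' T' hyp, show i - n + n = i by omega,
        if_pos (Set.mem_setOf_eq ▸ ⟨hi, hj⟩)]
    · rw [if_neg hi]; simp only [map_zero]; rw [if_neg (by simp only [Set.mem_setOf_eq]; omega)]
  · rw [if_neg hj, map_zero, map_zero, map_zero,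
      if_neg (by simp only [Set.mem_setOf_eq]; omega)]

lemma isPI_P2 (n : ℕ × ℕ) : IsPI e (P2 A B' T' n) {p | n.1 ≤ p.1 ∧ p.2 = n.2} := by
  intro i j k
  simp only [P2, B2, ContinuousLinearMap.mul_apply, T0_apply e A B' T' hyp,
    B_pow e A B' T' hyp]
  by_cases hj : n.2 ≤ j
  · rw [if_pos hj, pjB_apply e A B' T' hyp]
    by_cases hj0 : j - n.2 = 0
    · rw [if_pos hj0, adjB_pow e A B' T' hyp, show j - n.2 + n.2 = j by omega,
        A_pow e A B' T' hyp]
      by_cases hi : n.1 ≤ i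
      · rw [if_pos hi, adjA_pow e A B' T' hyp, show i - n.1 + n.1 = i by omega,
          if_pos (by simp only [Set.mem_setOf_eq]; omega)]
      · rw [if_neg hi]; simp only [map_zero]; rw [if_neg (by simp only [Set.mem_setOf_eq]; omega)]
    · rw [if_neg hj0, map_zero, map_zero, map_zero,
        if_neg (by simp only [Set.mem_setOf_eq]; omega)]
  · rw [if_neg hj, map_zero, map_zero, map_zero, map_zero,
      if_neg (by simp only [Set.mem_setOf_eq]; omega)]

lemma isPI_P3 (n : ℕ × ℕ) : IsPI e (P3 A B' T' n) {p | p.1 = n.1 ∧ n.2 ≤ p.2} := by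
  intro i j k
  simp only [P3, B3, ContinuousLinearMap.mul_apply, T0_apply e A B' T' hyp,
    B_pow e A B' T' hyp]
  by_cases hj : n.2 ≤ j
  · rw [if_pos hj, adjB_pow e A B' T' hyp, show j - n.2 + n.2 = j by omega,
      A_pow e A B' T' hyp]
    by_cases hi : n.1 ≤ i
    · rw [if_pos hi, pjA_apply e A B' T' hyp]
      by_cases hi0 : i - n.1 = 0
      · rw [if_pos hi0, adjA_pow e A B' T' hyp, show i - n.1 + n.1 = i by omega,
          if_pos (by simp only [Set.mem_setOf_eq]; omega)]
      · rw [if_neg hi0]; simp only [map_zero]; rw [if_neg (by simp only [Set.mem_setOf_eq]; omega)]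
    · rw [if_neg hi]; simp only [map_zero]; rw [if_neg (by simp only [Set.mem_setOf_eq]; omega)]
  · rw [if_neg hj, map_zero, map_zero, map_zero, map_zero,
      if_neg (by simp only [Set.mem_setOf_eq]; omega)]

lemma isPI_P4 (n : ℕ × ℕ) : IsPI e (P4 A B' T' n) {n} := by
  intro i j k
  simp only [P4, B4, ContinuousLinearMap.mul_apply, T0_apply e A B' T' hyp,
    B_pow e A B' T' hyp]
  by_cases hj : n.2 ≤ j
  · rw [if_pos hj, pjB_apply e A B' T' hyp]
    by_cases hj0 : j - n.2 = 0
    · rw [if_pos hj0, adjB_pow e A B' T' hyp, show j - n.2 + n.2 = j by omega,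
        A_pow e A B' T' hyp]
      by_cases hi : n.1 ≤ i
      · rw [if_pos hi, pjA_apply e A B' T' hyp]
        by_cases hi0 : i - n.1 = 0
        · rw [if_pos hi0, adjA_pow e A B' T' hyp, show i - n.1 + n.1 = i by omega,
            if_pos (by simp only [Set.mem_singleton_iff, Prod.ext_iff]; omega)]
        · rw [if_neg hi0, map_zero,
            if_neg (by simp only [Set.mem_singleton_iff, Prod.ext_iff]; omega)]
      · rw [if_neg hi, map_zero, map_zero,
          if_neg (by simp only [Set.mem_singleton_iff, Prod.ext_iff]; omega)]
    · rw [if_neg hj0, map_zero, map_zero, map_zero, map_zero,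
        if_neg (by simp only [Set.mem_singleton_iff, Prod.ext_iff]; omega)]
  · rw [if_neg hj, map_zero, map_zero, map_zero, map_zero, map_zero,
      if_neg (by simp only [Set.mem_singleton_iff, Prod.ext_iff]; omega)]


omit hyp

lemma mem_ALam1 {k : ℕ × ℕ} {n : ℕ} (h : n ≤ min k.1 k.2) :
    P1 A B' T' (n, n) ∈ ALamFin A B' T' k :=
  Or.inl (Or.inl (Or.inl ⟨n, h, rfl⟩))

lemma mem_ALam2 {k n : ℕ × ℕ} (h1 : n.2 = k.2) (h2 : n.2 ≤ n.1) (h3 : n.1 ≤ k.1) :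
    P2 A B' T' n ∈ ALamFin A B' T' k :=
  Or.inl (Or.inl (Or.inr ⟨n, h1, h2, h3, rfl⟩))

lemma mem_ALam3 {k n : ℕ × ℕ} (h1 : n.1 = k.1) (h2 : n.1 ≤ n.2) (h3 : n.2 ≤ k.2) :
    P3 A B' T' n ∈ ALamFin A B' T' k :=
  Or.inl (Or.inr ⟨n, h1, h2, h3, rfl⟩)

lemma mem_ALam4 {k : ℕ × ℕ} : P4 A B' T' k ∈ ALamFin A B' T' k := Or.inr rfl

lemma mem_E1 (n : ℕ) : P1 A B' T' (n, n) ∈ ESet A B' T' :=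
  Or.inl (Or.inl (Or.inl (Or.inr ⟨n, rfl⟩)))

lemma mem_E2 {n : ℕ × ℕ} (h : n.2 ≤ n.1) : P2 A B' T' n ∈ ESet A B' T' :=
  Or.inl (Or.inl (Or.inr ⟨n, h, rfl⟩))

lemma mem_E3 {n : ℕ × ℕ} (h : n.1 ≤ n.2) : P3 A B' T' n ∈ ESet A B' T' :=
  Or.inl (Or.inr ⟨n, h, rfl⟩)

lemma mem_E4 (n : ℕ × ℕ) : P4 A B' T' n ∈ ESet A B' T' := Or.inr ⟨n, rfl⟩

lemma mem_ALam_cases {x : H →L[ℂ] H} {k : ℕ × ℕ} (h : x ∈ ALamFin A B' T' k) :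
    (∃ n : ℕ, n ≤ min k.1 k.2 ∧ x = P1 A B' T' (n, n)) ∨
    (∃ n : ℕ × ℕ, n.2 = k.2 ∧ n.2 ≤ n.1 ∧ n.1 ≤ k.1 ∧ x = P2 A B' T' n) ∨
    (∃ n : ℕ × ℕ, n.1 = k.1 ∧ n.1 ≤ n.2 ∧ n.2 ≤ k.2 ∧ x = P3 A B' T' n) ∨
    x = P4 A B' T' k := by
  simpa only [ALamFin, Set.mem_union, Set.mem_setOf_eq, Set.mem_singleton_iff, or_assoc] using h

lemma mem_E_cases {x : H →L[ℂ] H} (h : x ∈ ESet A B' T') :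
    x = 0 ∨ (∃ n : ℕ, x = P1 A B' T' (n, n)) ∨
    (∃ n : ℕ × ℕ, n.2 ≤ n.1 ∧ x = P2 A B' T' n) ∨
    (∃ n : ℕ × ℕ, n.1 ≤ n.2 ∧ x = P3 A B' T' n) ∨
    ∃ n : ℕ × ℕ, x = P4 A B' T' n := by
  simpa only [ESet, Set.mem_union, Set.mem_setOf_eq, Set.mem_singleton_iff, or_assoc] using h

include hyp

/-- Every element of `E` is `0` or a partial identity whose set detects membership in
`A_{Λ(k)}`. -/
lemma mem_E_elim {x : H →L[ℂ] H} (h : x ∈ ESet A B' T') :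
    x = 0 ∨ ∃ S : Set (ℕ × ℕ), IsPI e x S ∧
      ∀ k : ℕ × ℕ, k ∈ S → x ∈ ALamFin A B' T' k := by
  rcases mem_E_cases h with rfl | ⟨n, rfl⟩ | ⟨n, hn, rfl⟩ | ⟨n, hn, rfl⟩ | ⟨n, rfl⟩
  · exact Or.inl rfl
  · refine Or.inr ⟨_, isPI_P1 hyp n, fun k hk => ?_⟩
    simp only [Set.mem_setOf_eq] at hk
    exact mem_ALam1 (by omega)
  · refine Or.inr ⟨_, isPI_P2 hyp n, fun k hk => ?_⟩
    simp only [Set.mem_setOf_eq] at hk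
    exact mem_ALam2 hk.2.symm hn hk.1
  · refine Or.inr ⟨_, isPI_P3 hyp n, fun k hk => ?_⟩
    simp only [Set.mem_setOf_eq] at hk
    exact mem_ALam3 hk.1.symm hn hk.2
  · refine Or.inr ⟨_, isPI_P4 hyp n, fun k hk => ?_⟩
    rw [Set.mem_singleton_iff] at hk
    subst hk
    exact mem_ALam4

lemma mem_ALam_elim {x : H →L[ℂ] H} {k : ℕ × ℕ} (h : x ∈ ALamFin A B' T' k) :
    ∃ S : Set (ℕ × ℕ), IsPI e x S ∧ k ∈ S := by
  rcases mem_ALam_cases h with ⟨n, hn, rfl⟩ | ⟨n, h1, h2, h3, rfl⟩ | ⟨n, h1, h2, h3, rfl⟩ | rfl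
  · exact ⟨_, isPI_P1 hyp n, by simp only [Set.mem_setOf_eq]; omega⟩
  · exact ⟨_, isPI_P2 hyp n, by simp only [Set.mem_setOf_eq]; omega⟩
  · exact ⟨_, isPI_P3 hyp n, by simp only [Set.mem_setOf_eq]; omega⟩
  · exact ⟨_, isPI_P4 hyp k, rfl⟩

lemma mul_mem_ALam {a b : H →L[ℂ] H} {k : ℕ × ℕ} (ha : a ∈ ALamFin A B' T' k)
    (hb : b ∈ ALamFin A B' T' k) : a * b ∈ ALamFin A B' T' k := by
  rcases mem_ALam_cases ha with ⟨n, hn, rfl⟩ | ⟨n, hn1, hn2, hn3, rfl⟩ |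
    ⟨n, hn1, hn2, hn3, rfl⟩ | rfl <;>
  rcases mem_ALam_cases hb with ⟨m, hm, rfl⟩ | ⟨m, hm1, hm2, hm3, rfl⟩ |
    ⟨m, hm1, hm2, hm3, rfl⟩ | rfl
  -- (1,1)
  · rw [((isPI_P1 hyp n).mul (isPI_P1 hyp m)).eq_of
      (isPI_P1 hyp (max n m))
      (by ext p; simp only [Set.mem_inter_iff, Set.mem_setOf_eq]; omega)]
    exact mem_ALam1 (by omega)
  -- (1,2)
  · rw [((isPI_P1 hyp n).mul (isPI_P2 hyp m)).eq_of
      (isPI_P2 hyp m)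
      (by ext p; simp only [Set.mem_inter_iff, Set.mem_setOf_eq]; omega)]
    exact mem_ALam2 hm1 hm2 hm3
  -- (1,3)
  · rw [((isPI_P1 hyp n).mul (isPI_P3 hyp m)).eq_of
      (isPI_P3 hyp m)
      (by ext p; simp only [Set.mem_inter_iff, Set.mem_setOf_eq]; omega)]
    exact mem_ALam3 hm1 hm2 hm3
  -- (1,4)
  · rw [((isPI_P1 hyp n).mul (isPI_P4 hyp k)).eq_of
      (isPI_P4 hyp k)
      (by ext p; simp only [Set.mem_inter_iff, Set.mem_setOf_eq, Set.mem_singleton_iff,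
        Prod.ext_iff, and_iff_right_iff_imp]; omega)]
    exact mem_ALam4
  -- (2,1)
  · rw [((isPI_P2 hyp n).mul (isPI_P1 hyp m)).eq_of
      (isPI_P2 hyp n)
      (by ext p; simp only [Set.mem_inter_iff, Set.mem_setOf_eq]; omega)]
    exact mem_ALam2 hn1 hn2 hn3
  -- (2,2)
  · rw [((isPI_P2 hyp n).mul (isPI_P2 hyp m)).eq_of
      (isPI_P2 hyp (max n.1 m.1, k.2))
      (by ext p; simp only [Set.mem_inter_iff, Set.mem_setOf_eq]; omega)]
    exact mem_ALam2 rfl (by simp; omega) (by simp; omega)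
  -- (2,3)
  · rw [((isPI_P2 hyp n).mul (isPI_P3 hyp m)).eq_of
      (isPI_P4 hyp k)
      (by ext p; simp only [Set.mem_inter_iff, Set.mem_setOf_eq, Set.mem_singleton_iff,
        Prod.ext_iff]; omega)]
    exact mem_ALam4
  -- (2,4)
  · rw [((isPI_P2 hyp n).mul (isPI_P4 hyp k)).eq_of
      (isPI_P4 hyp k)
      (by ext p; simp only [Set.mem_inter_iff, Set.mem_setOf_eq, Set.mem_singleton_iff,
        Prod.ext_iff, and_iff_right_iff_imp]; omega)]
    exact mem_ALam4
  -- (3,1)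
  · rw [((isPI_P3 hyp n).mul (isPI_P1 hyp m)).eq_of
      (isPI_P3 hyp n)
      (by ext p; simp only [Set.mem_inter_iff, Set.mem_setOf_eq]; omega)]
    exact mem_ALam3 hn1 hn2 hn3
  -- (3,2)
  · rw [((isPI_P3 hyp n).mul (isPI_P2 hyp m)).eq_of
      (isPI_P4 hyp k)
      (by ext p; simp only [Set.mem_inter_iff, Set.mem_setOf_eq, Set.mem_singleton_iff,
        Prod.ext_iff]; omega)]
    exact mem_ALam4
  -- (3,3)
  · rw [((isPI_P3 hyp n).mul (isPI_P3 hyp m)).eq_of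
      (isPI_P3 hyp (k.1, max n.2 m.2))
      (by ext p; simp only [Set.mem_inter_iff, Set.mem_setOf_eq]; omega)]
    exact mem_ALam3 rfl (by simp; omega) (by simp; omega)
  -- (3,4)
  · rw [((isPI_P3 hyp n).mul (isPI_P4 hyp k)).eq_of
      (isPI_P4 hyp k)
      (by ext p; simp only [Set.mem_inter_iff, Set.mem_setOf_eq, Set.mem_singleton_iff,
        Prod.ext_iff, and_iff_right_iff_imp]; omega)]
    exact mem_ALam4
  -- (4,1)
  · rw [((isPI_P4 hyp k).mul (isPI_P1 hyp m)).eq_of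
      (isPI_P4 hyp k)
      (by ext p; simp only [Set.mem_inter_iff, Set.mem_setOf_eq, Set.mem_singleton_iff,
        Prod.ext_iff, and_iff_left_iff_imp]; omega)]
    exact mem_ALam4
  -- (4,2)
  · rw [((isPI_P4 hyp k).mul (isPI_P2 hyp m)).eq_of
      (isPI_P4 hyp k)
      (by ext p; simp only [Set.mem_inter_iff, Set.mem_setOf_eq, Set.mem_singleton_iff,
        Prod.ext_iff, and_iff_left_iff_imp]; omega)]
    exact mem_ALam4
  -- (4,3)
  · rw [((isPI_P4 hyp k).mul (isPI_P3 hyp m)).eq_of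
      (isPI_P4 hyp k)
      (by ext p; simp only [Set.mem_inter_iff, Set.mem_setOf_eq, Set.mem_singleton_iff,
        Prod.ext_iff, and_iff_left_iff_imp]; omega)]
    exact mem_ALam4
  -- (4,4)
  · rw [((isPI_P4 hyp k).mul (isPI_P4 hyp k)).eq_of
      (isPI_P4 hyp k) (Set.inter_self _)]
    exact mem_ALam4

theorem ALamFin_ultra : ∀ k : ℕ × ℕ, IsUltrafilterIn (ESet A B' T') (ALamFin A B' T' k) := by
  intro k
  constructor
  · refine ⟨?_, ?_, ?_, ?_⟩
    -- subset
    · intro x hx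
      rcases mem_ALam_cases hx with ⟨n, hn, rfl⟩ | ⟨n, h1, h2, h3, rfl⟩ |
        ⟨n, h1, h2, h3, rfl⟩ | rfl
      · exact mem_E1 n
      · exact mem_E2 h2
      · exact mem_E3 h2
      · exact mem_E4 k
    -- 0 ∉
    · intro h0
      obtain ⟨S, hPI, hkS⟩ := mem_ALam_elim hyp h0
      exact hPI.ne_zero hkS rfl
    -- upward closed
    · intro a ha f hf haf
      obtain ⟨S, hPI, hkS⟩ := mem_ALam_elim hyp ha
      rcases mem_E_elim hyp hf with rfl | ⟨S', hPI', hmem⟩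
      · exact absurd (by rw [← haf, mul_zero]) (hPI.ne_zero hkS)
      · have h1 : IsPI e a (S ∩ S') := haf ▸ hPI.mul hPI'
        have h2 : S = S ∩ S' := hPI.set_eq h1
        exact hmem k (h2 ▸ hkS).2
    -- closed under products
    · intro a ha b hb
      exact mul_mem_ALam hyp ha hb
  · intro Bs hBs hsub
    refine Set.Subset.antisymm (fun b hb => ?_) hsub
    have hbE := hBs.1 hb
    rcases mem_E_elim hyp hbE with rfl | ⟨S, hPI, hmem⟩
    · exact absurd hb hBs.2.1
    · have hP4 : P4 A B' T' k ∈ Bs := hsub mem_ALam4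
      have hmul : b * P4 A B' T' k ∈ Bs := hBs.2.2.2 b hb _ hP4
      by_cases hk : k ∈ S
      · exact hmem k hk
      · exfalso
        have hz : b * P4 A B' T' k = 0 := by
          refine (hPI.mul (isPI_P4 hyp k)).eq_of IsPI.zero ?_
          ext p
          simp only [Set.mem_inter_iff, Set.mem_singleton_iff, Set.mem_empty_iff_false,
            iff_false, not_and]
          rintro hp rfl
          exact hk hp
        rw [hz] at hmul
        exact hBs.2.1 hmul


end Aux

theorem stmt7 {H : Type} [NormedAddCommGroup H] [InnerProductSpace ℂ H]
    [CompleteSpace H] (e : HilbertBasis (ℕ × ℕ × ℤ) ℂ H) (A B' : H →L[ℂ] H)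
    (T' : ℤ → (H →L[ℂ] H)) (hyp : ShiftHyp e A B' T') :
    ∀ k : ℕ × ℕ, IsUltrafilterIn (ESet A B' T') (ALamFin A B' T' k) := by
  exact ALamFin_ultra hyp

end SOq
end
end

section
/- The set E₁ = {P₁((l,l)) : l ∈ ℕ} of 'tail' projections is itself an ultrafilter in the projection semilattice E: it is a filter, and any filter containing E₁ equals E₁. -/
open ContinuousLinearMap
open scoped Classical

noncomputable section

section BasisProjection

variable {ι 𝕜 E : Type*} [RCLike 𝕜] [NormedAddCommGroup E] [InnerProductSpace 𝕜 E]

theorem HilbertBasis.eq_of_inner_eq (e : HilbertBasis ι 𝕜 E) {x y : E}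
    (h : ∀ i, inner 𝕜 (e i) x = inner 𝕜 (e i) y) : x = y := by
  apply e.repr.injective
  ext i
  simp only [e.repr_apply_apply, h]

theorem HilbertBasis.continuousLinearMap_ext (e : HilbertBasis ι 𝕜 E) {X Y : E →L[𝕜] E}
    (h : ∀ i, X (e i) = Y (e i)) : X = Y :=
  ContinuousLinearMap.ext_on
    (Submodule.dense_iff_topologicalClosure_eq_top.mpr e.dense_span) (by rintro _ ⟨i, rfl⟩; exact h i)

def IsBasisProj (e : HilbertBasis ι 𝕜 E) (S : Set ι) (X : E →L[𝕜] E) : Prop :=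
  ∀ i, X (e i) = S.indicator e i

namespace IsBasisProj

variable {e : HilbertBasis ι 𝕜 E} {S T : Set ι} {X Y : E →L[𝕜] E}

theorem unique (hX : IsBasisProj e S X) (hY : IsBasisProj e T Y) (hST : S = T) : X = Y :=
  e.continuousLinearMap_ext fun i => (hX i).trans (hST ▸ hY i).symm

theorem mul (hX : IsBasisProj e S X) (hY : IsBasisProj e T Y) :
    IsBasisProj e (S ∩ T) (X * Y) := by
  intro i
  by_cases hT : i ∈ T <;> by_cases hS : i ∈ S <;> simp [hX i, hY i, hS, hT]

theorem eq_zero_iff (hX : IsBasisProj e S X) : X = 0 ↔ S = ∅ := by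
  constructor
  · rintro rfl
    refine Set.eq_empty_iff_forall_notMem.mpr fun i hi => e.orthonormal.ne_zero i ?_
    simpa [hi] using (hX i).symm
  · rintro rfl
    exact e.continuousLinearMap_ext fun i => by simp [hX i]

end IsBasisProj

end BasisProjection

section UnilateralShift

variable {ι κ 𝕜 E : Type*} [RCLike 𝕜] [NormedAddCommGroup E] [InnerProductSpace 𝕜 E]

def IsShiftAlong (e : HilbertBasis ι 𝕜 E) (φ : ℕ × κ ≃ ι) (S : E →L[𝕜] E) : Prop :=
  (∀ x, S (e (φ (0, x))) = 0) ∧ ∀ i x, S (e (φ (i + 1, x))) = e (φ (i, x))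

namespace IsShiftAlong

variable {e : HilbertBasis ι 𝕜 E} {φ : ℕ × κ ≃ ι} {S : E →L[𝕜] E}

theorem pow_apply (hS : IsShiftAlong e φ S) (n i : ℕ) (x : κ) :
    (S ^ n) (e (φ (i, x))) = if n ≤ i then e (φ (i - n, x)) else 0 := by
  induction n generalizing i with
  | zero => simp
  | succ n ih =>
    rw [pow_succ, mul_apply_eq_comp]
    rcases i with _ | i
    · simp [hS.1 x]
    · simp [hS.2 i x, ih]

variable [CompleteSpace E]

theorem adjoint_apply (hS : IsShiftAlong e φ S) (i : ℕ) (x : κ) :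
    ContinuousLinearMap.adjoint S (e (φ (i, x))) = e (φ (i + 1, x)) := by
  refine e.eq_of_inner_eq fun w => ?_
  obtain ⟨⟨j, y⟩, rfl⟩ := φ.surjective w
  rw [ContinuousLinearMap.adjoint_inner_right, orthonormal_iff_ite.mp e.orthonormal]
  rcases j with _ | j
  · simp [hS.1 y]
  · simp [hS.2 j y, orthonormal_iff_ite.mp e.orthonormal]

theorem adjoint_pow_apply (hS : IsShiftAlong e φ S) (n i : ℕ) (x : κ) :
    (ContinuousLinearMap.adjoint S ^ n) (e (φ (i, x))) = e (φ (i + n, x)) := by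
  induction n generalizing i with
  | zero => simp
  | succ n ih =>
    rw [pow_succ, mul_apply_eq_comp, hS.adjoint_apply, ih, add_right_comm, add_assoc]

theorem one_sub_adjoint_mul_apply (hS : IsShiftAlong e φ S) (i : ℕ) (x : κ) :
    (1 - ContinuousLinearMap.adjoint S * S) (e (φ (i, x))) =
      if i = 0 then e (φ (i, x)) else 0 := by
  rcases i with _ | i
  · simp [hS.1 x]
  · simp [hS.2 i x, hS.adjoint_apply]

theorem isBasisProj_adjoint_pow_mul_pow (hS : IsShiftAlong e φ S) (n : ℕ) :
    IsBasisProj e {w | n ≤ (φ.symm w).1} (ContinuousLinearMap.adjoint S ^ n * S ^ n) := by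
  intro w
  obtain ⟨⟨i, x⟩, rfl⟩ := φ.surjective w
  by_cases h : n ≤ i
  · simp [hS.pow_apply, hS.adjoint_pow_apply, h, Nat.sub_add_cancel h]
  · simp [hS.pow_apply, h]

theorem isBasisProj_adjoint_pow_mul_one_sub_mul_pow (hS : IsShiftAlong e φ S) (n : ℕ) :
    IsBasisProj e {w | (φ.symm w).1 = n}
      (ContinuousLinearMap.adjoint S ^ n * (1 - ContinuousLinearMap.adjoint S * S) * S ^ n) := by
  intro w
  obtain ⟨⟨i, x⟩, rfl⟩ := φ.surjective w
  by_cases h : n ≤ i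
  · by_cases h' : i = n
    · subst h'
      simp [hS.pow_apply, hS.adjoint_pow_apply, hS.one_sub_adjoint_mul_apply]
    · simp [hS.pow_apply, hS.one_sub_adjoint_mul_apply, h, h', show i - n ≠ 0 by omega]
  · simp [hS.pow_apply, h, show i ≠ n by omega]

end IsShiftAlong

end UnilateralShift

namespace SOq

section RangeFilter

variable {X : Type} [Ring X] {E : Set X} {p : ℕ → X}

theorem isFilterIn_range (hpE : ∀ l, p l ∈ E) (hp0 : ∀ l, p l ≠ 0)
    (hmul : ∀ l m, p l * p m = p (max l m))
    (hann : ∀ x ∈ E, x ∉ Set.range p → ∃ N, p N * x = 0) :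
    IsFilterIn E (Set.range p) := by
  refine ⟨Set.range_subset_iff.mpr hpE, fun ⟨l, hl⟩ => hp0 l hl, ?_, ?_⟩
  · rintro _ ⟨l, rfl⟩ f hf hlf
    by_contra hfp
    obtain ⟨N, hN⟩ := hann f hf hfp
    apply hp0 (max N l)
    calc p (max N l) = p N * (p l * f) := by rw [hlf, hmul]
      _ = p l * (p N * f) := by rw [← mul_assoc, ← mul_assoc, hmul, hmul, max_comm]
      _ = 0 := by rw [hN, mul_zero]
  · rintro _ ⟨l, rfl⟩ _ ⟨m, rfl⟩
    exact ⟨max l m, (hmul l m).symm⟩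

theorem eq_range_of_isFilterIn (hann : ∀ x ∈ E, x ∉ Set.range p → ∃ N, p N * x = 0)
    {B : Set X} (hB : IsFilterIn E B) (hpB : Set.range p ⊆ B) : B = Set.range p := by
  refine Set.Subset.antisymm (fun b hb => ?_) hpB
  by_contra hbp
  obtain ⟨N, hN⟩ := hann b (hB.1 hb) hbp
  exact hB.2.1 (hN ▸ hB.2.2.2 _ (hpB ⟨N, rfl⟩) _ hb)

theorem isUltrafilterIn_range (hpE : ∀ l, p l ∈ E) (hp0 : ∀ l, p l ≠ 0)
    (hmul : ∀ l m, p l * p m = p (max l m))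
    (hann : ∀ x ∈ E, x ∉ Set.range p → ∃ N, p N * x = 0) :
    IsUltrafilterIn E (Set.range p) :=
  ⟨isFilterIn_range hpE hp0 hmul hann, fun _ hB hpB => eq_range_of_isFilterIn hann hB hpB⟩

end RangeFilter

variable {H : Type} [NormedAddCommGroup H] [InnerProductSpace ℂ H]

/-- `B'` shifts the second coordinate; relabelling through this equivalence lets the shift
lemmas proved for `A` apply to it. -/
def swapFirstTwo : ℕ × ℕ × ℤ ≃ ℕ × ℕ × ℤ where
  toFun v := (v.2.1, v.1, v.2.2)
  invFun v := (v.2.1, v.1, v.2.2)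
  left_inv _ := rfl
  right_inv _ := rfl

namespace ShiftHyp

variable {e : HilbertBasis (ℕ × ℕ × ℤ) ℂ H} {A B' : H →L[ℂ] H} {T' : ℤ → (H →L[ℂ] H)}

theorem isShiftAlong_fst (hyp : ShiftHyp e A B' T') : IsShiftAlong e (Equiv.refl _) A :=
  ⟨fun x => hyp.1 x.1 x.2, fun i x => hyp.2.1 i x.1 x.2⟩

theorem isShiftAlong_snd (hyp : ShiftHyp e A B' T') : IsShiftAlong e swapFirstTwo B' :=
  ⟨fun x => hyp.2.2.1 x.1 x.2, fun i x => hyp.2.2.2.1 x.1 i x.2⟩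

theorem T'_zero (hyp : ShiftHyp e A B' T') : T' 0 = 1 :=
  e.continuousLinearMap_ext fun ⟨i, j, k⟩ => by simp [hyp.2.2.2.2 0 i j k]

variable [CompleteSpace H]

theorem isBasisProj_P1 (hyp : ShiftHyp e A B' T') (l : ℕ) :
    IsBasisProj e {v | l ≤ v.1 ∧ l ≤ v.2.1} (P1 A B' T' (l, l)) := by
  have h := (hyp.isShiftAlong_fst.isBasisProj_adjoint_pow_mul_pow l).mul
    (hyp.isShiftAlong_snd.isBasisProj_adjoint_pow_mul_pow l)
  rw [P1, B1, hyp.T'_zero, mul_one]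
  simp only [mul_assoc] at h ⊢
  exact h

theorem isBasisProj_P2 (hyp : ShiftHyp e A B' T') (n : ℕ × ℕ) :
    IsBasisProj e {v | n.1 ≤ v.1 ∧ v.2.1 = n.2} (P2 A B' T' n) := by
  have h := (hyp.isShiftAlong_fst.isBasisProj_adjoint_pow_mul_pow n.1).mul
    (hyp.isShiftAlong_snd.isBasisProj_adjoint_pow_mul_one_sub_mul_pow n.2)
  rw [P2, B2, hyp.T'_zero, mul_one]
  simp only [mul_assoc] at h ⊢
  exact h

theorem isBasisProj_P3 (hyp : ShiftHyp e A B' T') (n : ℕ × ℕ) :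
    IsBasisProj e {v | v.1 = n.1 ∧ n.2 ≤ v.2.1} (P3 A B' T' n) := by
  have h := (hyp.isShiftAlong_fst.isBasisProj_adjoint_pow_mul_one_sub_mul_pow n.1).mul
    (hyp.isShiftAlong_snd.isBasisProj_adjoint_pow_mul_pow n.2)
  rw [P3, B3, hyp.T'_zero, mul_one]
  simp only [mul_assoc] at h ⊢
  exact h

theorem isBasisProj_P4 (hyp : ShiftHyp e A B' T') (n : ℕ × ℕ) :
    IsBasisProj e {v | v.1 = n.1 ∧ v.2.1 = n.2} (P4 A B' T' n) := by
  have h := (hyp.isShiftAlong_fst.isBasisProj_adjoint_pow_mul_one_sub_mul_pow n.1).mul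
    (hyp.isShiftAlong_snd.isBasisProj_adjoint_pow_mul_one_sub_mul_pow n.2)
  rw [P4, B4, hyp.T'_zero, mul_one]
  simp only [mul_assoc] at h ⊢
  exact h

theorem P1_ne_zero (hyp : ShiftHyp e A B' T') (l : ℕ) : P1 A B' T' (l, l) ≠ 0 :=
  (hyp.isBasisProj_P1 l).eq_zero_iff.not.mpr <|
    Set.nonempty_iff_ne_empty.mp ⟨(l, l, 0), le_rfl, le_rfl⟩

theorem P1_mul_P1 (hyp : ShiftHyp e A B' T') (l m : ℕ) :
    P1 A B' T' (l, l) * P1 A B' T' (m, m) = P1 A B' T' (max l m, max l m) :=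
  ((hyp.isBasisProj_P1 l).mul (hyp.isBasisProj_P1 m)).unique (hyp.isBasisProj_P1 _) <| by
    ext; simp only [Set.mem_inter_iff, Set.mem_ofPred_eq]; omega

theorem P1_mul_eq_zero (hyp : ShiftHyp e A B' T') {S : Set (ℕ × ℕ × ℤ)} {x : H →L[ℂ] H}
    (hx : IsBasisProj e S x) {N : ℕ} (hN : ∀ v ∈ S, v.1 < N ∨ v.2.1 < N) :
    P1 A B' T' (N, N) * x = 0 :=
  ((hyp.isBasisProj_P1 N).mul hx).eq_zero_iff.mpr <|
    Set.eq_empty_iff_forall_notMem.mpr fun v ⟨⟨h1, h2⟩, hv⟩ => by rcases hN v hv with h | h <;> omega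

theorem exists_P1_mul_eq_zero (hyp : ShiftHyp e A B' T') {x : H →L[ℂ] H}
    (hx : x ∈ ESet A B' T') (hxP1 : x ∉ Set.range fun l => P1 A B' T' (l, l)) :
    ∃ N, P1 A B' T' (N, N) * x = 0 := by
  rcases hx with (((rfl | ⟨l, rfl⟩) | ⟨n, -, rfl⟩) | ⟨n, -, rfl⟩) | ⟨n, rfl⟩
  · exact ⟨0, mul_zero _⟩
  · exact absurd ⟨l, rfl⟩ hxP1
  · exact ⟨n.2 + 1, hyp.P1_mul_eq_zero (hyp.isBasisProj_P2 n) fun _ ⟨_, hv⟩ => Or.inr (by omega)⟩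
  · exact ⟨n.1 + 1, hyp.P1_mul_eq_zero (hyp.isBasisProj_P3 n) fun _ ⟨hv, _⟩ => Or.inl (by omega)⟩
  · exact ⟨n.1 + 1, hyp.P1_mul_eq_zero (hyp.isBasisProj_P4 n) fun _ ⟨hv, _⟩ => Or.inl (by omega)⟩

end ShiftHyp

theorem stmt9 {H : Type} [NormedAddCommGroup H] [InnerProductSpace ℂ H]
    [CompleteSpace H] (e : HilbertBasis (ℕ × ℕ × ℤ) ℂ H) (A B' : H →L[ℂ] H)
    (T' : ℤ → (H →L[ℂ] H)) (hyp : ShiftHyp e A B' T') :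
    IsFilterIn (ESet A B' T') (ALam A B' T' (none, none)) ∧
    ∀ B, IsFilterIn (ESet A B' T') B → ALam A B' T' (none, none) ⊆ B →
      B = ALam A B' T' (none, none) := by
  have hALam : ALam A B' T' (none, none) = Set.range fun l => P1 A B' T' (l, l) :=
    Set.ext fun _ => exists_congr fun _ => eq_comm
  rw [hALam]
  exact isUltrafilterIn_range (fun l => Or.inl (Or.inl (Or.inl (Or.inr ⟨l, rfl⟩))))
    hyp.P1_ne_zero hyp.P1_mul_P1 fun _ => hyp.exists_P1_mul_eq_zero

end SOq
end
end
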